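/- arXiv:1504.06413 — 4 statements merged into one kernel-verified Lean document; each statement's English description precedes it below -/
import Mathlib

section
/- For an explicit s-stage Runge–Kutta method applied with fixed step size h to a time-driven ODE, if the internal variable x_{I,i} is latent of order q at time t^m, then for every stage index r with 1 ≤ r ≤ q the i-th component of the r-th internal stage computed at t^m equals the one computed at t^{m-1}: k_{I,i}^{m,r} = k_{I,i}^{m-1,r}. -/
open Finset

/-- A variable `v` is latent of order `ν ≥ 1` with respect to a semi-latency predicate
`semi` and input sets `pre`: it is latent of order 1 if it and all variables of its input
set are semi-latent, and latent of order `ν` if it is moreover such that all variables in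
its input set are (at least) latent of order `ν - 1`.  (Order 0 is vacuous.) -/
def LatentOfOrder {V : Type*} (semi : V → Prop) (pre : V → Set V) : ℕ → V → Prop
  | 0, _ => True
  | 1, v => semi v ∧ ∀ w ∈ pre v, semi w
  | ν + 2, v => (semi v ∧ ∀ w ∈ pre v, semi w) ∧
      ∀ w ∈ pre v, LatentOfOrder semi pre (ν + 1) w

/-- For an explicit `s`-stage Runge–Kutta method applied with fixed step
size `h` to a time-driven ODE, if the internal variable `x_{I,i}` is latent of order `q`
at time `t^m`, then for every stage index `r` with `1 ≤ r ≤ q` (here 0-indexed, so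
`r + 1 ≤ q`) the `i`-th component of the `r`-th internal stage computed at `t^m` equals
the one computed at `t^{m-1}`. -/
theorem latent_stage_eq
    {nE nI s : ℕ} (hs : 0 < s)
    (fE : ℝ → Fin nE → ℝ)
    (fI : (Fin nE → ℝ) → (Fin nI → ℝ) → Fin nI → ℝ)
    (a : Fin s → Fin s → ℝ) (b c : Fin s → ℝ)
    (hexplicit : ∀ q r : Fin s, q ≤ r → a q r = 0)
    (hc1 : c ⟨0, hs⟩ = 0)
    (h : ℝ) (t : ℕ → ℝ) (ht : ∀ m, t (m + 1) = t m + h)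
    (xE : ℕ → Fin nE → ℝ) (xI : ℕ → Fin nI → ℝ)
    (kI : ℕ → Fin s → Fin nI → ℝ)
    (hxE : ∀ m, xE m = fE (t m))
    (hstage : ∀ (m : ℕ) (q : Fin s), kI m q =
        fI (fE (t m + c q * h))
          (fun i => xI m i +
            h * ∑ r ∈ univ.filter (fun r : Fin s => r < q), a q r * kI m r i))
    (hupdate : ∀ (m : ℕ) (i : Fin nI),
        xI (m + 1) i = xI m i + h * ∑ q, b q * kI m q i)
    (pre : Fin nE ⊕ Fin nI → Set (Fin nE ⊕ Fin nI))
    (hpreE : ∀ j : Fin nE, pre (Sum.inl j) = ∅)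
    (hdep : ∀ (i : Fin nI) (u w : Fin nE → ℝ) (v z : Fin nI → ℝ),
        (∀ j : Fin nE, Sum.inl j ∈ pre (Sum.inr i) → u j = w j) →
        (∀ j : Fin nI, Sum.inr j ∈ pre (Sum.inr i) → v j = z j) →
        fI u v i = fI w z i)
    (m : ℕ) (hm : 1 ≤ m) (i : Fin nI) (q : ℕ) (hq : 1 ≤ q)
    (hlat : LatentOfOrder
        (Sum.elim
          (fun j : Fin nE => ∀ r : Fin s,
            fE (t m + c r * h) j = fE (t (m - 1) + c r * h) j)
          (fun j : Fin nI => ∑ r, b r * kI (m - 1) r j = 0))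
        pre q (Sum.inr i)) :
    ∀ r : Fin s, (r : ℕ) + 1 ≤ q → kI m r i = kI (m - 1) r i := by

  set semi := Sum.elim
          (fun j : Fin nE => ∀ r : Fin s,
            fE (t m + c r * h) j = fE (t (m - 1) + c r * h) j)
          (fun j : Fin nI => ∑ r, b r * kI (m - 1) r j = 0) with hsemi
  have hx : ∀ j : Fin nI, (∑ r, b r * kI (m - 1) r j = 0) → xI m j = xI (m - 1) j := by
    intro j hj
    have hm' : m - 1 + 1 = m := Nat.succ_pred_eq_of_pos hm
    have hu := hupdate (m - 1) j
    rw [hm'] at hu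
    rw [hu, hj, mul_zero, add_zero]
  have key : ∀ (i : Fin nI) (r : Fin s),
      (semi (Sum.inr i) ∧ ∀ w ∈ pre (Sum.inr i), semi w) →
      (∀ j : Fin nI, Sum.inr j ∈ pre (Sum.inr i) →
        ∀ r' : Fin s, r' < r → kI m r' j = kI (m - 1) r' j) →
      kI m r i = kI (m - 1) r i := by
    intro i r hsl hK
    rw [hstage m r, hstage (m - 1) r]
    refine hdep i _ _ _ _ (fun j hj => ?_) (fun j hj => ?_)
    · have := hsl.2 (Sum.inl j) hj
      rw [hsemi] at this
      exact this r
    · have hsj := hsl.2 (Sum.inr j) hj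
      rw [hsemi] at hsj
      show xI m j + _ = xI (m - 1) j + _
      rw [hx j hsj]
      congr 2
      refine Finset.sum_congr rfl fun r' hr' => ?_
      rw [hK j hj r' (Finset.mem_filter.mp hr').2]
  suffices H : ∀ n : ℕ, ∀ i : Fin nI,
      LatentOfOrder semi pre (n + 1) (Sum.inr i) →
      ∀ r : Fin s, (r : ℕ) ≤ n → kI m r i = kI (m - 1) r i by
    intro r hr
    obtain ⟨n, rfl⟩ : ∃ n, q = n + 1 := ⟨q - 1, (Nat.succ_pred_eq_of_pos hq).symm⟩
    exact H n i hlat r (by omega)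
  intro n
  induction n with
  | zero =>
    intro i hl r hr
    have hl' : semi (Sum.inr i) ∧ ∀ w ∈ pre (Sum.inr i), semi w := hl
    exact key i r hl' (fun j hj r' hr' => absurd (Fin.lt_iff_val_lt_val.mp hr') (by omega))
  | succ n ih =>
    intro i hl r hr
    have hl' : (semi (Sum.inr i) ∧ ∀ w ∈ pre (Sum.inr i), semi w) ∧
        ∀ w ∈ pre (Sum.inr i), LatentOfOrder semi pre (n + 1) w := hl
    refine key i r hl'.1 (fun j hj r' hr' => ?_)
    exact ih j (hl'.2 (Sum.inr j) hj) r' (by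
      have := Fin.lt_iff_val_lt_val.mp hr'; omega)
end

section
/- For an explicit s-stage Runge–Kutta method applied with fixed step size h to a time-driven ODE with c_1 = 0, if the internal variable x_{I,i} is latent of order 1 at time t^m (so all variables of pre(x_{I,i}) are semi-latent at t^m), then the first internal stage satisfies k_{I,i}^{m,1} = f_{I,i}(x_E^m, x_I^m) = f_{I,i}(x_E^{m-1}, x_I^{m-1}) = k_{I,i}^{m-1,1}. -/
open Finset

/-- For an explicit `s`-stage Runge–Kutta method with `c₁ = 0` applied with
fixed step size `h` to a time-driven ODE, if the internal variable `x_{I,i}` is latent of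
order 1 at time `t^m`, then the first internal stage satisfies
`k_{I,i}^{m,1} = f_{I,i}(x_E^m, x_I^m) = f_{I,i}(x_E^{m-1}, x_I^{m-1}) = k_{I,i}^{m-1,1}`. -/
theorem latent_first_stage_eq
    {nE nI s : ℕ} (hs : 0 < s)
    (fE : ℝ → Fin nE → ℝ)
    (fI : (Fin nE → ℝ) → (Fin nI → ℝ) → Fin nI → ℝ)
    (a : Fin s → Fin s → ℝ) (b c : Fin s → ℝ)
    (hexplicit : ∀ q r : Fin s, q ≤ r → a q r = 0)
    (hc1 : c ⟨0, hs⟩ = 0)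
    (h : ℝ) (t : ℕ → ℝ) (ht : ∀ m, t (m + 1) = t m + h)
    (xE : ℕ → Fin nE → ℝ) (xI : ℕ → Fin nI → ℝ)
    (kI : ℕ → Fin s → Fin nI → ℝ)
    (hxE : ∀ m, xE m = fE (t m))
    (hstage : ∀ (m : ℕ) (q : Fin s), kI m q =
        fI (fE (t m + c q * h))
          (fun i => xI m i +
            h * ∑ r ∈ univ.filter (fun r : Fin s => r < q), a q r * kI m r i))
    (hupdate : ∀ (m : ℕ) (i : Fin nI),
        xI (m + 1) i = xI m i + h * ∑ q, b q * kI m q i)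
    (pre : Fin nE ⊕ Fin nI → Set (Fin nE ⊕ Fin nI))
    (hpreE : ∀ j : Fin nE, pre (Sum.inl j) = ∅)
    (hdep : ∀ (i : Fin nI) (u w : Fin nE → ℝ) (v z : Fin nI → ℝ),
        (∀ j : Fin nE, Sum.inl j ∈ pre (Sum.inr i) → u j = w j) →
        (∀ j : Fin nI, Sum.inr j ∈ pre (Sum.inr i) → v j = z j) →
        fI u v i = fI w z i)
    (m : ℕ) (hm : 1 ≤ m) (i : Fin nI)
    (hlat : LatentOfOrder
        (Sum.elim
          (fun j : Fin nE => ∀ r : Fin s,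
            fE (t m + c r * h) j = fE (t (m - 1) + c r * h) j)
          (fun j : Fin nI => ∑ r, b r * kI (m - 1) r j = 0))
        pre 1 (Sum.inr i)) :
    kI m ⟨0, hs⟩ i = fI (xE m) (xI m) i ∧
      fI (xE m) (xI m) i = fI (xE (m - 1)) (xI (m - 1)) i ∧
      fI (xE (m - 1)) (xI (m - 1)) i = kI (m - 1) ⟨0, hs⟩ i := by

  obtain ⟨hsemi, hpre⟩ := hlat
  have hfirst : ∀ n : ℕ, kI n ⟨0, hs⟩ i = fI (fE (t n)) (xI n) i := by
    intro n
    have := hstage n ⟨0, hs⟩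
    have hempty : (univ.filter (fun r : Fin s => r < (⟨0, hs⟩ : Fin s))) = ∅ := by
      apply Finset.filter_false_of_mem
      intro r _
      exact fun hr => absurd hr (Nat.not_lt_zero r.1)
    rw [this, hempty, hc1]
    simp
  have hmid : fI (xE m) (xI m) i = fI (xE (m - 1)) (xI (m - 1)) i := by
    apply hdep
    · intro j hj
      have := hpre _ hj
      simp only [Sum.elim_inl] at this
      have h0 := this ⟨0, hs⟩
      rw [hc1] at h0
      simp only [zero_mul, add_zero] at h0
      rw [hxE, hxE]
      exact h0
    · intro j hj
      have hz := hpre _ hj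
      simp only [Sum.elim_inr] at hz
      have hm1 : m - 1 + 1 = m := Nat.succ_pred_eq_of_pos hm
      have hu := hupdate (m - 1) j
      rw [hm1] at hu
      rw [hu, hz, mul_zero, add_zero]
  refine ⟨?_, hmid, ?_⟩
  · rw [hfirst m, hxE m]
  · rw [hfirst (m-1), hxE (m-1)]
end

section
/- For an explicit s-stage Runge–Kutta method applied with fixed step size h to a time-driven ODE, if the internal variable x_{I,i} is latent of order s at time t^m, then the i-th component of the increment function is unchanged from the previous step, Φ_i(t^m, x^m, h) = Φ_i(t^{m-1}, x^{m-1}, h), and consequently the Runge–Kutta update satisfies x_{I,i}^{m+1} = x_{I,i}^m. -/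
open Finset

lemma LatentOfOrder.semi_of_succ {V : Type*} {semi : V → Prop} {pre : V → Set V} {ν : ℕ}
    {v : V} (h : LatentOfOrder semi pre (ν + 1) v) : semi v ∧ ∀ w ∈ pre v, semi w := by
  cases ν with
  | zero => exact h
  | succ ν => exact h.1

lemma LatentOfOrder.pre_of_succ {V : Type*} {semi : V → Prop} {pre : V → Set V} {ν : ℕ}
    {v : V} (h : LatentOfOrder semi pre (ν + 1) v) :
    ∀ w ∈ pre v, LatentOfOrder semi pre ν w := by
  cases ν with
  | zero => intro w _; trivial
  | succ ν => exact h.2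

/-- For an explicit `s`-stage Runge–Kutta method applied with fixed step
size `h` to a time-driven ODE, if the internal variable `x_{I,i}` is latent of order `s`
at time `t^m`, then the `i`-th component of the increment function is unchanged from the
previous step, `Φ_i(t^m, x^m, h) = Φ_i(t^{m-1}, x^{m-1}, h)`, and consequently the
Runge–Kutta update satisfies `x_{I,i}^{m+1} = x_{I,i}^m`. -/
theorem latent_increment_eq
    {nE nI s : ℕ} (hs : 0 < s)
    (fE : ℝ → Fin nE → ℝ)
    (fI : (Fin nE → ℝ) → (Fin nI → ℝ) → Fin nI → ℝ)
    (a : Fin s → Fin s → ℝ) (b c : Fin s → ℝ)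
    (hexplicit : ∀ q r : Fin s, q ≤ r → a q r = 0)
    (hc1 : c ⟨0, hs⟩ = 0)
    (h : ℝ) (t : ℕ → ℝ) (ht : ∀ m, t (m + 1) = t m + h)
    (xE : ℕ → Fin nE → ℝ) (xI : ℕ → Fin nI → ℝ)
    (kI : ℕ → Fin s → Fin nI → ℝ)
    (hxE : ∀ m, xE m = fE (t m))
    (hstage : ∀ (m : ℕ) (q : Fin s), kI m q =
        fI (fE (t m + c q * h))
          (fun i => xI m i +
            h * ∑ r ∈ univ.filter (fun r : Fin s => r < q), a q r * kI m r i))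
    (hupdate : ∀ (m : ℕ) (i : Fin nI),
        xI (m + 1) i = xI m i + h * ∑ q, b q * kI m q i)
    (pre : Fin nE ⊕ Fin nI → Set (Fin nE ⊕ Fin nI))
    (hpreE : ∀ j : Fin nE, pre (Sum.inl j) = ∅)
    (hdep : ∀ (i : Fin nI) (u w : Fin nE → ℝ) (v z : Fin nI → ℝ),
        (∀ j : Fin nE, Sum.inl j ∈ pre (Sum.inr i) → u j = w j) →
        (∀ j : Fin nI, Sum.inr j ∈ pre (Sum.inr i) → v j = z j) →
        fI u v i = fI w z i)
    (m : ℕ) (hm : 1 ≤ m) (i : Fin nI)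
    (hlat : LatentOfOrder
        (Sum.elim
          (fun j : Fin nE => ∀ r : Fin s,
            fE (t m + c r * h) j = fE (t (m - 1) + c r * h) j)
          (fun j : Fin nI => ∑ r, b r * kI (m - 1) r j = 0))
        pre s (Sum.inr i)) :
    (∑ r, b r * kI m r i = ∑ r, b r * kI (m - 1) r i) ∧
      xI (m + 1) i = xI m i := by
  set semi : Fin nE ⊕ Fin nI → Prop := Sum.elim
      (fun j : Fin nE => ∀ r : Fin s,
        fE (t m + c r * h) j = fE (t (m - 1) + c r * h) j)
      (fun j : Fin nI => ∑ r, b r * kI (m - 1) r j = 0) with hsemi_def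
  have key : ∀ ν (i : Fin nI), LatentOfOrder semi pre ν (Sum.inr i) →
      ∀ q : Fin s, (q : ℕ) < ν → kI m q i = kI (m - 1) q i := by
    intro ν
    induction ν with
    | zero => intro i _ q hq; omega
    | succ ν ih =>
      intro i hl q hq
      have hsm := LatentOfOrder.semi_of_succ hl
      have hpr := LatentOfOrder.pre_of_succ hl
      rw [hstage m q, hstage (m - 1) q]
      apply hdep
      · intro j hj
        exact (hsm.2 _ hj) q
      · intro j hj
        have hsj : ∑ r, b r * kI (m - 1) r j = 0 := hsm.2 _ hj
        have hx : xI m j = xI (m - 1) j := by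
          have hu := hupdate (m - 1) j
          rw [Nat.sub_add_cancel hm] at hu
          rw [hu, hsj]; ring
        have hk : ∀ r ∈ univ.filter (fun r : Fin s => r < q),
            kI m r j = kI (m - 1) r j := by
          intro r hr
          simp only [mem_filter] at hr
          exact ih j (hpr _ hj) r (by have := hr.2; omega)
        rw [hx]
        congr 1
        congr 1
        exact Finset.sum_congr rfl fun r hr => by rw [hk r hr]
  obtain ⟨ν, rfl⟩ : ∃ ν, s = ν + 1 := ⟨s - 1, by omega⟩
  have hPhi : ∑ r, b r * kI m r i = ∑ r, b r * kI (m - 1) r i :=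
    Finset.sum_congr rfl fun r _ => by rw [key (ν + 1) i hlat r r.isLt]
  refine ⟨hPhi, ?_⟩
  have hzero : ∑ r, b r * kI (m - 1) r i = 0 :=
    (LatentOfOrder.semi_of_succ hlat).1
  rw [hupdate m i, hPhi, hzero]
  ring
end

section
/- (Equivalence of explicit Runge–Kutta methods and signal-flow based Runge–Kutta methods, Theorem 1.) For a time-driven ODE integrated with an explicit s-stage Runge–Kutta method with fixed step size h, the signal-flow based Runge–Kutta method—which sets x_{I,i}^{m+1} = x_{I,i}^m whenever x_{I,i} is latent of order s at t^m and otherwise performs the standard update x_{I,i}^{m+1} = x_{I,i}^m + h Φ_i(t^m, x^m, h)—produces, under exact computation, exactly the same sequence of iterates (x_E^m, x_I^m) as the standard explicit Runge–Kutta method started from the same initial value. -/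
open Finset

/-- Theorem 1: For a time-driven ODE integrated with an explicit `s`-stage
Runge–Kutta method with fixed step size `h`, the signal-flow based Runge–Kutta method
`(yE, yI)` — which sets `y_{I,i}^{m+1} = y_{I,i}^m` whenever `y_{I,i}` is latent of order
`s` at `t^m` (with the latency states at `t^m` determined by the method's own iterates at
`t^{m-1}`) and otherwise performs the standard Runge–Kutta update — produces, under exact
computation, exactly the same sequence of iterates as the standard explicit Runge–Kutta
method `(xE, xI)` started from the same initial value. -/
theorem sfRK_eq_RK
    {nE nI s : ℕ} (hs : 0 < s)
    (fE : ℝ → Fin nE → ℝ)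
    (fI : (Fin nE → ℝ) → (Fin nI → ℝ) → Fin nI → ℝ)
    (a : Fin s → Fin s → ℝ) (b c : Fin s → ℝ)
    (hexplicit : ∀ q r : Fin s, q ≤ r → a q r = 0)
    (hc1 : c ⟨0, hs⟩ = 0)
    (h : ℝ) (t : ℕ → ℝ) (ht : ∀ m, t (m + 1) = t m + h)
    -- the input sets and the dependency structure of the right-hand side
    (pre : Fin nE ⊕ Fin nI → Set (Fin nE ⊕ Fin nI))
    (hpreE : ∀ j : Fin nE, pre (Sum.inl j) = ∅)
    (hdep : ∀ (i : Fin nI) (u w : Fin nE → ℝ) (v z : Fin nI → ℝ),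
        (∀ j : Fin nE, Sum.inl j ∈ pre (Sum.inr i) → u j = w j) →
        (∀ j : Fin nI, Sum.inr j ∈ pre (Sum.inr i) → v j = z j) →
        fI u v i = fI w z i)
    -- the standard explicit Runge--Kutta method
    (xE : ℕ → Fin nE → ℝ) (xI : ℕ → Fin nI → ℝ)
    (kI : ℕ → Fin s → Fin nI → ℝ)
    (hxE : ∀ m, xE m = fE (t m))
    (hstage : ∀ (m : ℕ) (q : Fin s), kI m q =
        fI (fE (t m + c q * h))
          (fun i => xI m i +
            h * ∑ r ∈ univ.filter (fun r : Fin s => r < q), a q r * kI m r i))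
    (hupdate : ∀ (m : ℕ) (i : Fin nI),
        xI (m + 1) i = xI m i + h * ∑ q, b q * kI m q i)
    -- the signal-flow based Runge--Kutta method
    (yE : ℕ → Fin nE → ℝ) (yI : ℕ → Fin nI → ℝ)
    (kJ : ℕ → Fin s → Fin nI → ℝ)
    (hyE : ∀ m, yE m = fE (t m))
    (hstageJ : ∀ (m : ℕ) (q : Fin s), kJ m q =
        fI (fE (t m + c q * h))
          (fun i => yI m i +
            h * ∑ r ∈ univ.filter (fun r : Fin s => r < q), a q r * kJ m r i))
    (hupdJ_latent : ∀ (m : ℕ) (i : Fin nI), 1 ≤ m →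
        LatentOfOrder
          (Sum.elim
            (fun j : Fin nE => ∀ r : Fin s,
              fE (t m + c r * h) j = fE (t (m - 1) + c r * h) j)
            (fun j : Fin nI => ∑ r, b r * kJ (m - 1) r j = 0))
          pre s (Sum.inr i) →
        yI (m + 1) i = yI m i)
    (hupdJ_active : ∀ (m : ℕ) (i : Fin nI),
        ¬ (1 ≤ m ∧ LatentOfOrder
          (Sum.elim
            (fun j : Fin nE => ∀ r : Fin s,
              fE (t m + c r * h) j = fE (t (m - 1) + c r * h) j)
            (fun j : Fin nI => ∑ r, b r * kJ (m - 1) r j = 0))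
          pre s (Sum.inr i)) →
        yI (m + 1) i = yI m i + h * ∑ q, b q * kJ m q i)
    -- same initial value
    (hinit : yI 0 = xI 0) :
    ∀ m : ℕ, yE m = xE m ∧ yI m = xI m := by
  classical
  -- At any step where the states agree, all stage values agree.
  have stages : ∀ m, yI m = xI m → ∀ q : Fin s, kJ m q = kI m q := by
    intro m hm
    have : ∀ n : ℕ, ∀ q : Fin s, (q : ℕ) < n → kJ m q = kI m q := by
      intro n
      induction n with
      | zero => intro q hq; omega
      | succ n IH =>
        intro q hq
        have hsum : ∀ i : Fin nI,
            ∑ r ∈ univ.filter (fun r : Fin s => r < q), a q r * kJ m r i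
              = ∑ r ∈ univ.filter (fun r : Fin s => r < q), a q r * kI m r i := by
          intro i
          refine Finset.sum_congr rfl fun r hr => ?_
          have hrq : (r : ℕ) < (q : ℕ) := (Finset.mem_filter.mp hr).2
          rw [IH r (by omega)]
        rw [hstageJ m q, hstage m q, hm]
        exact congrArg _ (funext fun i => by rw [hsum i])
    exact fun q => this s q q.isLt
  -- heads of latency
  have latent_head : ∀ {V : Type} (semi : V → Prop) (pre' : V → Set V) (ν : ℕ) (v : V),
      1 ≤ ν → LatentOfOrder semi pre' ν v → semi v ∧ ∀ w ∈ pre' v, semi w := by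
    intro V semi pre' ν v hν hl
    match ν, hν, hl with
    | 1, _, hl => exact hl
    | (ν+2), _, hl => exact hl.1
  have main : ∀ m, yI m = xI m := by
    intro m
    induction m using Nat.strong_induction_on with
    | _ m IH =>
      match m with
      | 0 => exact hinit
      | (m+1) =>
        have hm : yI m = xI m := IH m (by omega)
        have hk : ∀ r, kJ m r = kI m r := stages m hm
        funext i
        set Sem : Fin nE ⊕ Fin nI → Prop := Sum.elim
            (fun j : Fin nE => ∀ r : Fin s,
              fE (t m + c r * h) j = fE (t (m - 1) + c r * h) j)
            (fun j : Fin nI => ∑ r, b r * kJ (m - 1) r j = 0) with hSem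
        by_cases hcond : 1 ≤ m ∧ LatentOfOrder Sem pre s (Sum.inr i)
        · -- latent branch
          obtain ⟨hm1, hlat⟩ := hcond
          obtain ⟨n, rfl⟩ : ∃ n, m = n + 1 := ⟨m - 1, by omega⟩
          have hprev : yI n = xI n := IH n (by omega)
          have hkprev : ∀ r, kJ n r = kI n r := stages n hprev
          -- semi-latency of an internal variable gives state repetition
          have hx : ∀ j : Fin nI, Sem (Sum.inr j) → xI (n+1) j = xI n j := by
            intro j hj
            have hj' : ∑ r, b r * kJ n r j = 0 := hj
            have h0 : ∑ r, b r * kI n r j = 0 := by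
              rw [← hj']
              exact Finset.sum_congr rfl fun r _ => by rw [hkprev r]
            rw [hupdate n j, h0, mul_zero, add_zero]
          -- key: latent of order ν ⇒ stages with index < ν repeat
          have key : ∀ ν : ℕ, ∀ j : Fin nI, LatentOfOrder Sem pre ν (Sum.inr j) →
              ∀ q : Fin s, (q : ℕ) < ν → kI (n+1) q j = kI n q j := by
            intro ν
            induction ν using Nat.strong_induction_on with
            | _ ν IHν =>
              intro j hlatj q hq
              have hν : 1 ≤ ν := by omega
              have hsemi := latent_head Sem pre ν (Sum.inr j) hν hlatj
              rw [hstage (n+1) q, hstage n q]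
              apply hdep
              · intro e he
                exact (hsemi.2 _ he) q
              · intro w hw
                have hxw : xI (n+1) w = xI n w := hx w (hsemi.2 _ hw)
                have hkw : ∀ r ∈ Finset.univ.filter (fun r : Fin s => r < q),
                    kI (n+1) r w = kI n r w := by
                  intro r hr
                  have hrq : (r : ℕ) < (q : ℕ) := (Finset.mem_filter.mp hr).2
                  match ν, hq with
                  | 1, hq => omega
                  | (ν+2), hq =>
                    exact IHν (ν+1) (by omega) w (hlatj.2 _ hw) r (by omega)
                rw [hxw]
                congr 2
                exact Finset.sum_congr rfl fun r hr => by rw [hkw r hr]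
          have hall : ∀ q : Fin s, kI (n+1) q i = kI n q i :=
            fun q => key s i hlat q q.isLt
          have hsemi_i := (latent_head Sem pre s (Sum.inr i) hs hlat).1
          have h0 : ∑ q, b q * kI (n+1) q i = 0 := by
            have h1 : ∑ q, b q * kI (n+1) q i = ∑ q, b q * kI n q i :=
              Finset.sum_congr rfl fun q _ => by rw [hall q]
            have hsemi_i' : ∑ r, b r * kJ n r i = 0 := hsemi_i
            have h2 : ∑ q, b q * kI n q i = 0 := by
              rw [← hsemi_i']
              exact Finset.sum_congr rfl fun r _ => by rw [hkprev r]
            rw [h1, h2]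
          rw [hupdJ_latent (n+1) i hm1 hlat, hupdate (n+1) i, h0, mul_zero, add_zero, hm]
        · -- active branch
          rw [hupdJ_active m i hcond, hm, hupdate m i]
          congr 2
          exact Finset.sum_congr rfl fun q _ => by rw [hk q]
  intro m
  exact ⟨by rw [hyE m, hxE m], main m⟩
end
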